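/- Let ζ : Ω → ℝ be smooth on an open Ω ⊆ ℝ³ with ζᵤ nowhere zero and satisfying equation (6) on Ω, and set ζ* := (F(u) − ζ₁)/ζᵤ. Let W = I₁ × I₂ be an open rectangle, x₂⁰ ∈ I₂, and let u : W → ℝ be smooth with (x,u(x)) ∈ Ω, satisfying ∂₂u(x) = ζ(x,u(x)) on all of W and ∂₁u(x₁,x₂⁰) = ζ*(x₁,x₂⁰,u(x₁,x₂⁰)) for all x₁ ∈ I₁. Then ∂₁u(x) = ζ*(x,u(x)) on all of W, and consequently u solves ∂₁∂₂u = F(u) on W. -/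

import Mathlib

/-- Partial derivative in `x₁` of a function of `(x₁,x₂,u)`. -/
noncomputable def pd1 (f : ℝ × ℝ × ℝ → ℝ) (p : ℝ × ℝ × ℝ) : ℝ :=
  deriv (fun s => f (s, p.2.1, p.2.2)) p.1

/-- Partial derivative in `x₂` of a function of `(x₁,x₂,u)`. -/
noncomputable def pd2 (f : ℝ × ℝ × ℝ → ℝ) (p : ℝ × ℝ × ℝ) : ℝ :=
  deriv (fun s => f (p.1, s, p.2.2)) p.2.1

/-- Partial derivative in `u` of a function of `(x₁,x₂,u)`. -/
noncomputable def pdu (f : ℝ × ℝ × ℝ → ℝ) (p : ℝ × ℝ × ℝ) : ℝ :=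
  deriv (fun s => f (p.1, p.2.1, s)) p.2.2

/-- Partial derivative in `x₁` of a function of two real variables. -/
noncomputable def d1 (f : ℝ × ℝ → ℝ) (q : ℝ × ℝ) : ℝ := deriv (fun s => f (s, q.2)) q.1

/-- Partial derivative in `x₂` of a function of two real variables. -/
noncomputable def d2 (f : ℝ × ℝ → ℝ) (q : ℝ × ℝ) : ℝ := deriv (fun s => f (q.1, s)) q.2

/-- Equation (6): `ζ₁₂ + ζζ₁ᵤ + (ζ₂ᵤ + ζζᵤᵤ)(F(u) − ζ₁)/ζᵤ + ζᵤF(u) = ζF′(u)`. -/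
def Eq6 (F : ℝ → ℝ) (ζ : ℝ × ℝ × ℝ → ℝ) (p : ℝ × ℝ × ℝ) : Prop :=
  pd1 (pd2 ζ) p + ζ p * pdu (pd1 ζ) p
    + (pdu (pd2 ζ) p + ζ p * pdu (pdu ζ) p) * (F p.2.2 - pd1 ζ p) / pdu ζ p
    + pdu ζ p * F p.2.2 = ζ p * deriv F p.2.2


open Filter Topology Set

noncomputable section WaveAux

/-- curve derivative helper : `f` differentiable at `p`, line in first coordinate. -/
lemma hasDerivAt_line1 {f : ℝ×ℝ×ℝ → ℝ} {p : ℝ×ℝ×ℝ} (hf : DifferentiableAt ℝ f p) :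
    HasDerivAt (fun s => f (s, p.2.1, p.2.2)) (fderiv ℝ f p (1,0,0)) p.1 :=
  hf.hasFDerivAt.comp_hasDerivAt p.1 ((hasDerivAt_id p.1).prodMk (hasDerivAt_const _ _))

lemma hasDerivAt_line2 {f : ℝ×ℝ×ℝ → ℝ} {p : ℝ×ℝ×ℝ} (hf : DifferentiableAt ℝ f p) :
    HasDerivAt (fun s => f (p.1, s, p.2.2)) (fderiv ℝ f p (0,1,0)) p.2.1 :=
  hf.hasFDerivAt.comp_hasDerivAt p.2.1
    ((hasDerivAt_const _ _).prodMk ((hasDerivAt_id _).prodMk (hasDerivAt_const _ _)))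

lemma hasDerivAt_lineu {f : ℝ×ℝ×ℝ → ℝ} {p : ℝ×ℝ×ℝ} (hf : DifferentiableAt ℝ f p) :
    HasDerivAt (fun s => f (p.1, p.2.1, s)) (fderiv ℝ f p (0,0,1)) p.2.2 :=
  hf.hasFDerivAt.comp_hasDerivAt p.2.2
    ((hasDerivAt_const _ _).prodMk ((hasDerivAt_const _ _).prodMk (hasDerivAt_id _)))

lemma pd1_eq {f : ℝ×ℝ×ℝ → ℝ} {p : ℝ×ℝ×ℝ} (hf : DifferentiableAt ℝ f p) :
    pd1 f p = fderiv ℝ f p (1,0,0) := (hasDerivAt_line1 hf).deriv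

lemma pd2_eq {f : ℝ×ℝ×ℝ → ℝ} {p : ℝ×ℝ×ℝ} (hf : DifferentiableAt ℝ f p) :
    pd2 f p = fderiv ℝ f p (0,1,0) := (hasDerivAt_line2 hf).deriv

lemma pdu_eq {f : ℝ×ℝ×ℝ → ℝ} {p : ℝ×ℝ×ℝ} (hf : DifferentiableAt ℝ f p) :
    pdu f p = fderiv ℝ f p (0,0,1) := (hasDerivAt_lineu hf).deriv

lemma hasDerivAt_lineA {f : ℝ×ℝ → ℝ} {q : ℝ×ℝ} (hf : DifferentiableAt ℝ f q) :
    HasDerivAt (fun s => f (s, q.2)) (fderiv ℝ f q (1,0)) q.1 :=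
  hf.hasFDerivAt.comp_hasDerivAt q.1 ((hasDerivAt_id q.1).prodMk (hasDerivAt_const _ _))

lemma hasDerivAt_lineB {f : ℝ×ℝ → ℝ} {q : ℝ×ℝ} (hf : DifferentiableAt ℝ f q) :
    HasDerivAt (fun s => f (q.1, s)) (fderiv ℝ f q (0,1)) q.2 :=
  hf.hasFDerivAt.comp_hasDerivAt q.2 ((hasDerivAt_const _ _).prodMk (hasDerivAt_id _))

lemma d1_eq {f : ℝ×ℝ → ℝ} {q : ℝ×ℝ} (hf : DifferentiableAt ℝ f q) :
    d1 f q = fderiv ℝ f q (1,0) := (hasDerivAt_lineA hf).deriv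

lemma d2_eq {f : ℝ×ℝ → ℝ} {q : ℝ×ℝ} (hf : DifferentiableAt ℝ f q) :
    d2 f q = fderiv ℝ f q (0,1) := (hasDerivAt_lineB hf).deriv

end WaveAux
section Helper2
open Filter Topology Set

/-- congruence of `pd1` under eventual equality -/
lemma pd1_congr {f g : ℝ×ℝ×ℝ → ℝ} {p : ℝ×ℝ×ℝ} (h : f =ᶠ[nhds p] g) : pd1 f p = pd1 g p := by
  have hc : Filter.Tendsto (fun s : ℝ => ((s, p.2.1, p.2.2) : ℝ×ℝ×ℝ)) (nhds p.1) (nhds p) := by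
    have : Continuous (fun s : ℝ => ((s, p.2.1, p.2.2) : ℝ×ℝ×ℝ)) := by continuity
    simpa using this.tendsto p.1
  exact (h.comp_tendsto hc).deriv_eq

lemma pdu_congr {f g : ℝ×ℝ×ℝ → ℝ} {p : ℝ×ℝ×ℝ} (h : f =ᶠ[nhds p] g) : pdu f p = pdu g p := by
  have hc : Filter.Tendsto (fun s : ℝ => ((p.1, p.2.1, s) : ℝ×ℝ×ℝ)) (nhds p.2.2) (nhds p) := by
    have : Continuous (fun s : ℝ => ((p.1, p.2.1, s) : ℝ×ℝ×ℝ)) := by continuity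
    simpa using this.tendsto p.2.2
  exact (h.comp_tendsto hc).deriv_eq

end Helper2
section Main
open Filter Topology Set

/-- The key computation: along a curve `c` through `p ∈ Ω` with velocity `(0,1,ζ p)`,
the function `ζ* = (F(u) - ζ₁)/ζᵤ` has derivative `F(u(p))`, thanks to equation (6). -/
lemma zs_deriv_along {F : ℝ → ℝ} {Ω : Set (ℝ×ℝ×ℝ)} {ζ : ℝ×ℝ×ℝ → ℝ}
    (hF : ContDiff ℝ (⊤ : ℕ∞) F) (hΩ : IsOpen Ω)
    (hζ : ContDiffOn ℝ (⊤ : ℕ∞) ζ Ω) (hζu : ∀ p ∈ Ω, pdu ζ p ≠ 0)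
    {p : ℝ×ℝ×ℝ} (hp : p ∈ Ω) (hE6 : Eq6 F ζ p)
    {c : ℝ → ℝ×ℝ×ℝ} {t : ℝ} (hct : c t = p) (hc : HasDerivAt c (0,1,ζ p) t) :
    HasDerivAt (fun s => (F (c s).2.2 - pd1 ζ (c s)) / pdu ζ (c s)) (F p.2.2) t := by
  subst hct
  have hζd : ∀ q ∈ Ω, DifferentiableAt ℝ ζ q := fun q hq =>
    (hζ.differentiableOn (by simp) q hq).differentiableAt (hΩ.mem_nhds hq)
  have hDζ : ContDiffOn ℝ (⊤:ℕ∞) (fderiv ℝ ζ) Ω := hζ.fderiv_of_isOpen hΩ (by simp)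
  have hBd : DifferentiableAt ℝ (fderiv ℝ ζ) (c t) :=
    (hDζ.differentiableOn (by simp) _ hp).differentiableAt (hΩ.mem_nhds hp)
  have hsym : ∀ v w, fderiv ℝ (fderiv ℝ ζ) (c t) v w = fderiv ℝ (fderiv ℝ ζ) (c t) w v :=
    (hζ.contDiffAt (hΩ.mem_nhds hp)).isSymmSndFDerivAt (by rw [minSmoothness_of_isRCLikeNormedField]; exact WithTop.coe_le_coe.mpr le_top)
  -- evaluation maps q ↦ fderiv ζ q v
  have heval : ∀ v : ℝ×ℝ×ℝ, HasFDerivAt (fun q => fderiv ℝ ζ q v)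
      ((fderiv ℝ (fderiv ℝ ζ) (c t)).flip v) (c t) := by
    intro v
    have := hBd.hasFDerivAt.clm_apply (hasFDerivAt_const v (c t))
    simpa using this
  -- third component of the curve
  have hc3 : HasDerivAt (fun s => (c s).2.2) (ζ (c t)) t := by
    have hπ : HasFDerivAt (fun q : ℝ×ℝ×ℝ => q.2.2)
        (((ContinuousLinearMap.snd ℝ ℝ ℝ).comp (ContinuousLinearMap.snd ℝ ℝ (ℝ×ℝ)))) (c t) :=
      ((ContinuousLinearMap.snd ℝ ℝ ℝ).comp (ContinuousLinearMap.snd ℝ ℝ (ℝ×ℝ))).hasFDerivAt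
    exact hπ.comp_hasDerivAt t hc
  -- components of the numerator and denominator along the curve
  have h1 : HasDerivAt (fun s => fderiv ℝ ζ (c s) (1,0,0))
      (fderiv ℝ (fderiv ℝ ζ) (c t) (0,1,ζ (c t)) (1,0,0)) t := by
    exact (heval (1,0,0)).comp_hasDerivAt t hc
  have hu1 : HasDerivAt (fun s => fderiv ℝ ζ (c s) (0,0,1))
      (fderiv ℝ (fderiv ℝ ζ) (c t) (0,1,ζ (c t)) (0,0,1)) t := by
    exact (heval (0,0,1)).comp_hasDerivAt t hc
  have hFc : HasDerivAt (fun s => F (c s).2.2) (deriv F ((c t).2.2) * ζ (c t)) t :=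
    ((hF.differentiable (by simp) _).hasDerivAt).comp t hc3
  have hnum : HasDerivAt (fun s => F (c s).2.2 - fderiv ℝ ζ (c s) (1,0,0))
      (deriv F ((c t).2.2) * ζ (c t) - fderiv ℝ (fderiv ℝ ζ) (c t) (0,1,ζ (c t)) (1,0,0)) t :=
    hFc.sub h1
  have hD0 : fderiv ℝ ζ (c t) (0,0,1) ≠ 0 := by
    rw [← pdu_eq (hζd _ hp)]; exact hζu _ hp
  have hdiv := hnum.div hu1 hD0
  -- replace the function by the `pd`-version (they agree near `t`)
  have heqf : (fun s => (F (c s).2.2 - pd1 ζ (c s)) / pdu ζ (c s))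
      =ᶠ[nhds t] (fun s => (F (c s).2.2 - fderiv ℝ ζ (c s) (1,0,0)) / fderiv ℝ ζ (c s) (0,0,1)) := by
    filter_upwards [hc.continuousAt.preimage_mem_nhds (hΩ.mem_nhds hp)] with s hs
    rw [pd1_eq (hζd _ hs), pdu_eq (hζd _ hs)]
  have hmain := hdiv.congr_of_eventuallyEq heqf
  -- now identify the derivative value with `F (c t).2.2` using equation (6)
  refine hmain.congr_deriv ?_
  symm
  -- translate Eq6 into second-fderiv language
  have hvec : ((0,1,ζ (c t)) : ℝ×ℝ×ℝ) = ((0,1,0) : ℝ×ℝ×ℝ) + ζ (c t) • ((0,0,1) : ℝ×ℝ×ℝ) := by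
    simp [Prod.ext_iff]
  have hw1 : fderiv ℝ (fderiv ℝ ζ) (c t) (0,1,ζ (c t)) (1,0,0)
      = fderiv ℝ (fderiv ℝ ζ) (c t) (0,1,0) (1,0,0)
        + ζ (c t) * fderiv ℝ (fderiv ℝ ζ) (c t) (0,0,1) (1,0,0) := by
    rw [hvec, map_add, map_smul]; simp
  have hwu : fderiv ℝ (fderiv ℝ ζ) (c t) (0,1,ζ (c t)) (0,0,1)
      = fderiv ℝ (fderiv ℝ ζ) (c t) (0,1,0) (0,0,1)
        + ζ (c t) * fderiv ℝ (fderiv ℝ ζ) (c t) (0,0,1) (0,0,1) := by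
    rw [hvec, map_add, map_smul]; simp
  -- pd-second-derivatives equal B entries
  have hpdf : ∀ v : ℝ×ℝ×ℝ, (fun q => pd1 ζ q) =ᶠ[nhds (c t)] (fun q => fderiv ℝ ζ q (1,0,0)) := by
    intro v
    filter_upwards [hΩ.mem_nhds hp] with q hq
    exact pd1_eq (hζd q hq)
  have hpd2f : pd2 ζ =ᶠ[nhds (c t)] (fun q => fderiv ℝ ζ q (0,1,0)) := by
    filter_upwards [hΩ.mem_nhds hp] with q hq
    exact pd2_eq (hζd q hq)
  have hpduf : pdu ζ =ᶠ[nhds (c t)] (fun q => fderiv ℝ ζ q (0,0,1)) := by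
    filter_upwards [hΩ.mem_nhds hp] with q hq
    exact pdu_eq (hζd q hq)
  have e12 : pd1 (pd2 ζ) (c t) = fderiv ℝ (fderiv ℝ ζ) (c t) (1,0,0) (0,1,0) := by
    rw [pd1_congr hpd2f, pd1_eq (heval (0,1,0)).differentiableAt, (heval (0,1,0)).fderiv]
    rfl
  have eu1 : pdu (pd1 ζ) (c t) = fderiv ℝ (fderiv ℝ ζ) (c t) (0,0,1) (1,0,0) := by
    rw [pdu_congr (hpdf (1,0,0)), pdu_eq (heval (1,0,0)).differentiableAt, (heval (1,0,0)).fderiv]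
    rfl
  have eu2 : pdu (pd2 ζ) (c t) = fderiv ℝ (fderiv ℝ ζ) (c t) (0,0,1) (0,1,0) := by
    rw [pdu_congr hpd2f, pdu_eq (heval (0,1,0)).differentiableAt, (heval (0,1,0)).fderiv]
    rfl
  have euu : pdu (pdu ζ) (c t) = fderiv ℝ (fderiv ℝ ζ) (c t) (0,0,1) (0,0,1) := by
    rw [pdu_congr hpduf, pdu_eq (heval (0,0,1)).differentiableAt, (heval (0,0,1)).fderiv]
    rfl
  unfold Eq6 at hE6
  rw [e12, eu1, eu2, euu, pd1_eq (hζd _ hp), pdu_eq (hζd _ hp)] at hE6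
  rw [hw1, hwu]
  rw [hsym (0,1,0) (1,0,0), hsym (0,1,0) (0,0,1)]
  set a := fderiv ℝ (fderiv ℝ ζ) (c t) (1,0,0) (0,1,0) with ha
  set b := fderiv ℝ (fderiv ℝ ζ) (c t) (0,0,1) (1,0,0) with hb
  set cc := fderiv ℝ (fderiv ℝ ζ) (c t) (0,0,1) (0,1,0) with hcc
  set dd := fderiv ℝ (fderiv ℝ ζ) (c t) (0,0,1) (0,0,1) with hdd
  set z := ζ (c t)
  set D := fderiv ℝ ζ (c t) (0,0,1)
  set n1 := fderiv ℝ ζ (c t) (1,0,0)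
  set f := F ((c t).2.2)
  set f' := deriv F ((c t).2.2)
  field_simp at hE6 ⊢
  ring_nf
  ring_nf at hE6
  linarith [hE6]

end Main

open Filter Topology Set

/-- If `ζ` solves the determining equation (6), `u` satisfies the invariant surface
condition `∂₂u = ζ(x,u)` on a rectangle `I₁ × I₂`, and `∂₁u = ζ*(x,u)` holds on the
line `x₂ = x₂⁰`, then `∂₁u = ζ*(x,u)` holds on the whole rectangle and `u` solves the
wave equation `∂₁∂₂u = F(u)` there; here `ζ* = (F(u) − ζ₁)/ζᵤ`. -/
theorem wave_invariant_surface_propagation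
    (F : ℝ → ℝ) (hF : ContDiff ℝ (⊤ : ℕ∞) F)
    (Ω : Set (ℝ × ℝ × ℝ)) (hΩ : IsOpen Ω)
    (ζ : ℝ × ℝ × ℝ → ℝ) (hζ : ContDiffOn ℝ (⊤ : ℕ∞) ζ Ω)
    (hζu : ∀ p ∈ Ω, pdu ζ p ≠ 0)
    (hEq6 : ∀ p ∈ Ω, Eq6 F ζ p)
    (I₁ I₂ : Set ℝ) (hI₁ : IsOpen I₁) (hI₁' : IsPreconnected I₁)
    (hI₂ : IsOpen I₂) (hI₂' : IsPreconnected I₂) (x₂₀ : ℝ) (hx₂₀ : x₂₀ ∈ I₂)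
    (u : ℝ × ℝ → ℝ) (hu : ContDiffOn ℝ (⊤ : ℕ∞) u (I₁ ×ˢ I₂))
    (hmem : ∀ x₁ ∈ I₁, ∀ x₂ ∈ I₂, (x₁, x₂, u (x₁, x₂)) ∈ Ω)
    (hisc : ∀ x₁ ∈ I₁, ∀ x₂ ∈ I₂,
      d2 u (x₁, x₂) = ζ (x₁, x₂, u (x₁, x₂)))
    (hline : ∀ x₁ ∈ I₁,
      d1 u (x₁, x₂₀)
        = (F (u (x₁, x₂₀)) - pd1 ζ (x₁, x₂₀, u (x₁, x₂₀)))
            / pdu ζ (x₁, x₂₀, u (x₁, x₂₀))) :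
    (∀ x₁ ∈ I₁, ∀ x₂ ∈ I₂,
      d1 u (x₁, x₂)
        = (F (u (x₁, x₂)) - pd1 ζ (x₁, x₂, u (x₁, x₂)))
            / pdu ζ (x₁, x₂, u (x₁, x₂))) ∧
    (∀ x₁ ∈ I₁, ∀ x₂ ∈ I₂, d1 (d2 u) (x₁, x₂) = F (u (x₁, x₂))) := by
  have hW : IsOpen (I₁ ×ˢ I₂) := hI₁.prod hI₂
  have hζd : ∀ q ∈ Ω, DifferentiableAt ℝ ζ q := fun q hq =>
    (hζ.differentiableOn (by simp) q hq).differentiableAt (hΩ.mem_nhds hq)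
  have hud : ∀ x ∈ I₁ ×ˢ I₂, DifferentiableAt ℝ u x := fun x hx =>
    (hu.differentiableOn (by simp) x hx).differentiableAt (hW.mem_nhds hx)
  have hDu : ContDiffOn ℝ (⊤:ℕ∞) (fderiv ℝ u) (I₁ ×ˢ I₂) := hu.fderiv_of_isOpen hW (by simp)
  have hEvu : ∀ x ∈ I₁ ×ˢ I₂, ∀ v : ℝ×ℝ, HasFDerivAt (fun q => fderiv ℝ u q v)
      ((fderiv ℝ (fderiv ℝ u) x).flip v) x := by
    intro x hx v
    have hBd : DifferentiableAt ℝ (fderiv ℝ u) x :=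
      (hDu.differentiableOn (by simp) x hx).differentiableAt (hW.mem_nhds hx)
    simpa using hBd.hasFDerivAt.clm_apply (hasFDerivAt_const v x)
  have husym : ∀ x ∈ I₁ ×ˢ I₂, ∀ v w : ℝ×ℝ,
      fderiv ℝ (fderiv ℝ u) x v w = fderiv ℝ (fderiv ℝ u) x w v := fun x hx =>
    (hu.contDiffAt (hW.mem_nhds hx)).isSymmSndFDerivAt (by rw [minSmoothness_of_isRCLikeNormedField]; exact WithTop.coe_le_coe.mpr le_top)
  -- chain rule along the horizontal line through ζ
  have hchain : ∀ x₁ ∈ I₁, ∀ x₂ ∈ I₂,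
      HasDerivAt (fun s => ζ (s, x₂, u (s, x₂)))
        (pd1 ζ (x₁, x₂, u (x₁, x₂)) + d1 u (x₁, x₂) * pdu ζ (x₁, x₂, u (x₁, x₂))) x₁ := by
    intro x₁ h1 x₂ h2
    have hx : ((x₁, x₂) : ℝ×ℝ) ∈ I₁ ×ˢ I₂ := ⟨h1, h2⟩
    have hp := hmem x₁ h1 x₂ h2
    have hu1 : HasDerivAt (fun s => u (s, x₂)) (d1 u (x₁, x₂)) x₁ := by
      have := hasDerivAt_lineA (hud _ hx)
      rwa [← d1_eq (hud _ hx)] at this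
    have hcurve : HasDerivAt (fun s => ((s, x₂, u (s, x₂)) : ℝ×ℝ×ℝ))
        (1, 0, d1 u (x₁, x₂)) x₁ :=
      (hasDerivAt_id x₁).prodMk ((hasDerivAt_const _ _).prodMk hu1)
    have hmain := (hζd _ hp).hasFDerivAt.comp_hasDerivAt x₁ hcurve
    have hval : fderiv ℝ ζ (x₁, x₂, u (x₁, x₂)) (1, 0, d1 u (x₁, x₂))
        = pd1 ζ (x₁, x₂, u (x₁, x₂)) + d1 u (x₁, x₂) * pdu ζ (x₁, x₂, u (x₁, x₂)) := by
      have hvec : ((1, 0, d1 u (x₁,x₂)) : ℝ×ℝ×ℝ)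
          = ((1,0,0) : ℝ×ℝ×ℝ) + d1 u (x₁,x₂) • ((0,0,1) : ℝ×ℝ×ℝ) := by
        simp [Prod.ext_iff]
      rw [hvec, map_add, map_smul, pd1_eq (hζd _ hp), pdu_eq (hζd _ hp)]
      simp
    rw [← hval]
    exact hmain
  -- `d1 (d2 u)` in terms of ζ
  have hd1d2 : ∀ x₁ ∈ I₁, ∀ x₂ ∈ I₂,
      d1 (d2 u) (x₁, x₂)
        = pd1 ζ (x₁, x₂, u (x₁, x₂)) + d1 u (x₁, x₂) * pdu ζ (x₁, x₂, u (x₁, x₂)) := by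
    intro x₁ h1 x₂ h2
    have heq : (fun s => d2 u (s, x₂)) =ᶠ[nhds x₁] (fun s => ζ (s, x₂, u (s, x₂))) := by
      filter_upwards [hI₁.mem_nhds h1] with s hs
      exact hisc s hs x₂ h2
    have : d1 (d2 u) (x₁, x₂) = deriv (fun s => ζ (s, x₂, u (s, x₂))) x₁ := heq.deriv_eq
    rw [this, (hchain x₁ h1 x₂ h2).deriv]
  -- mixed partial of u computed via symmetry
  have hmix : ∀ x₁ ∈ I₁, ∀ x₂ ∈ I₂,
      fderiv ℝ (fderiv ℝ u) (x₁, x₂) (0,1) (1,0)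
        = pd1 ζ (x₁, x₂, u (x₁, x₂)) + d1 u (x₁, x₂) * pdu ζ (x₁, x₂, u (x₁, x₂)) := by
    intro x₁ h1 x₂ h2
    have hx : ((x₁, x₂) : ℝ×ℝ) ∈ I₁ ×ˢ I₂ := ⟨h1, h2⟩
    rw [husym _ hx]
    have hline1 : HasDerivAt (fun s => fderiv ℝ u (s, x₂) (0,1))
        (fderiv ℝ (fderiv ℝ u) (x₁, x₂) (1,0) (0,1)) x₁ := by
      have := hasDerivAt_lineA (hEvu _ hx (0,1)).differentiableAt
      rwa [(hEvu _ hx (0,1)).fderiv] at this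
    have heq : (fun s => fderiv ℝ u (s, x₂) (0,1)) =ᶠ[nhds x₁]
        (fun s => ζ (s, x₂, u (s, x₂))) := by
      filter_upwards [hI₁.mem_nhds h1] with s hs
      rw [← d2_eq (hud _ ⟨hs, h2⟩)]
      exact hisc s hs x₂ h2
    have : fderiv ℝ (fderiv ℝ u) (x₁, x₂) (1,0) (0,1)
        = deriv (fun s => ζ (s, x₂, u (s, x₂))) x₁ := by
      rw [← hline1.deriv]
      exact heq.deriv_eq
    rw [this, (hchain x₁ h1 x₂ h2).deriv]
  -- the main propagation argument
  have main : ∀ x₁ ∈ I₁, ∀ x₂ ∈ I₂,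
      d1 u (x₁, x₂)
        = (F (u (x₁, x₂)) - pd1 ζ (x₁, x₂, u (x₁, x₂))) / pdu ζ (x₁, x₂, u (x₁, x₂)) := by
    intro x₁ h1 x₂ h2
    set g : ℝ → ℝ := fun t => d1 u (x₁, t)
      - (F (u (x₁, t)) - pd1 ζ (x₁, t, u (x₁, t))) / pdu ζ (x₁, t, u (x₁, t)) with hg
    suffices hgz : g x₂ = 0 by
      have := sub_eq_zero.mp hgz
      exact this
    -- derivative of g
    have hg' : ∀ t ∈ I₂, HasDerivAt g (pdu ζ (x₁, t, u (x₁, t)) * g t) t := by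
      intro t ht
      have hx : ((x₁, t) : ℝ×ℝ) ∈ I₁ ×ˢ I₂ := ⟨h1, ht⟩
      have hp := hmem x₁ h1 t ht
      -- the vertical curve
      have hu2 : HasDerivAt (fun s => u (x₁, s)) (ζ (x₁, t, u (x₁, t))) t := by
        have := hasDerivAt_lineB (hud _ hx)
        rwa [← d2_eq (hud _ hx), hisc x₁ h1 t ht] at this
      have hcurve : HasDerivAt (fun s => ((x₁, s, u (x₁, s)) : ℝ×ℝ×ℝ))
          (0, 1, ζ (x₁, t, u (x₁, t))) t :=
        (hasDerivAt_const _ _).prodMk ((hasDerivAt_id _).prodMk hu2)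
      -- derivative of the ζ* part
      have hzs := zs_deriv_along hF hΩ hζ hζu hp (hEq6 _ hp) rfl hcurve
      -- derivative of the d1 u part
      have hw : HasDerivAt (fun s => d1 u (x₁, s))
          (F (u (x₁, t)) + pdu ζ (x₁, t, u (x₁, t)) * g t) t := by
        have heq : (fun s => d1 u (x₁, s)) =ᶠ[nhds t]
            (fun s => fderiv ℝ u (x₁, s) (1,0)) := by
          filter_upwards [hI₂.mem_nhds ht] with s hs
          exact d1_eq (hud _ ⟨h1, hs⟩)
        have hvert : HasDerivAt (fun s => ((x₁, s) : ℝ×ℝ)) (0, 1) t :=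
          (hasDerivAt_const _ _).prodMk (hasDerivAt_id _)
        have hev : HasDerivAt (fun s => fderiv ℝ u (x₁, s) (1,0))
            (fderiv ℝ (fderiv ℝ u) (x₁, t) (0,1) (1,0)) t := by
          exact (hEvu _ hx (1,0)).comp_hasDerivAt t hvert
        have h0 := (hev.congr_of_eventuallyEq heq)
        have hval : fderiv ℝ (fderiv ℝ u) (x₁, t) (0,1) (1,0)
            = F (u (x₁, t)) + pdu ζ (x₁, t, u (x₁, t)) * g t := by
          rw [hmix x₁ h1 t ht, hg]
          have hD := hζu _ hp
          field_simp
          ring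
        rwa [hval] at h0
      have := hw.sub hzs
      have hval2 : F (u (x₁, t)) + pdu ζ (x₁, t, u (x₁, t)) * g t - F (u (x₁, t))
          = pdu ζ (x₁, t, u (x₁, t)) * g t := by ring
      rw [hval2] at this
      exact this
    -- g vanishes at x₂₀
    have hg0 : g x₂₀ = 0 := by
      rw [hg]
      simp only [sub_eq_zero]
      exact hline x₁ h1
    -- the coefficient is continuous on I₂
    set a : ℝ → ℝ := fun t => pdu ζ (x₁, t, u (x₁, t)) with haa
    have hacont : ContinuousOn a I₂ := by
      have hγ : ContinuousOn (fun t => ((x₁, t, u (x₁, t)) : ℝ×ℝ×ℝ)) I₂ := by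
        refine continuousOn_const.prodMk (continuousOn_id.prodMk ?_)
        have hline2 : Continuous (fun t : ℝ => ((x₁, t) : ℝ×ℝ)) := by continuity
        exact hu.continuousOn.comp hline2.continuousOn (fun t ht => ⟨h1, ht⟩)
      have hDζ : ContDiffOn ℝ (⊤:ℕ∞) (fderiv ℝ ζ) Ω := hζ.fderiv_of_isOpen hΩ (by simp)
      have hcontΩ : ContinuousOn (fun q => fderiv ℝ ζ q (0,0,1)) Ω := by
        have happ : Continuous (fun L : (ℝ×ℝ×ℝ) →L[ℝ] ℝ => L ((0:ℝ),(0:ℝ),(1:ℝ))) :=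
          (ContinuousLinearMap.apply ℝ ℝ (((0:ℝ),(0:ℝ),(1:ℝ)) : ℝ×ℝ×ℝ)).continuous
        exact happ.comp_continuousOn hDζ.continuousOn
      have : ContinuousOn (fun t => fderiv ℝ ζ ((x₁, t, u (x₁, t)) : ℝ×ℝ×ℝ) (0,0,1)) I₂ :=
        hcontΩ.comp hγ (fun t ht => hmem x₁ h1 t ht)
      refine this.congr ?_
      intro t ht
      exact pdu_eq (hζd _ (hmem x₁ h1 t ht))
    -- integrating factor
    set A : ℝ → ℝ := fun t => ∫ s in x₂₀..t, a s with hAdef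
    have hI₂c : Convex ℝ I₂ := hI₂'.convex
    have hA : ∀ t ∈ I₂, HasDerivAt A (a t) t := by
      intro t ht
      have hsub : uIcc x₂₀ t ⊆ I₂ := (hI₂c.ordConnected).uIcc_subset hx₂₀ ht
      exact intervalIntegral.integral_hasDerivAt_right
        ((hacont.mono hsub).intervalIntegrable)
        (hacont.stronglyMeasurableAtFilter hI₂ t ht)
        (hacont.continuousAt (hI₂.mem_nhds ht))
    set h : ℝ → ℝ := fun t => Real.exp (-A t) * g t with hhdef
    have hh : ∀ t ∈ I₂, HasDerivAt h 0 t := by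
      intro t ht
      have he : HasDerivAt (fun t => Real.exp (-A t)) (Real.exp (-A t) * (-a t)) t :=
        ((hA t ht).neg).exp
      have := he.mul (hg' t ht)
      have hval : Real.exp (-A t) * -a t * g t + Real.exp (-A t) * (a t * g t) = 0 := by ring
      rwa [hval] at this
    have hdiff : DifferentiableOn ℝ h I₂ := fun t ht =>
      ((hh t ht).differentiableAt).differentiableWithinAt
    have hzero : ∀ t ∈ I₂, fderivWithin ℝ h I₂ t = 0 := by
      intro t ht
      rw [fderivWithin_of_isOpen hI₂ ht, ((hh t ht).hasFDerivAt).fderiv]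
      ext
      simp
    have hconst : h x₂ = h x₂₀ := hI₂c.is_const_of_fderivWithin_eq_zero hdiff hzero h2 hx₂₀
    have hA0 : A x₂₀ = 0 := intervalIntegral.integral_same
    have : h x₂ = 0 := by
      rw [hconst, hhdef]
      simp [hA0, hg0]
    have hexp : Real.exp (-A x₂) ≠ 0 := Real.exp_ne_zero _
    have := mul_eq_zero.mp this
    rcases this with hbad | hgood
    · exact absurd hbad hexp
    · exact hgood
  refine ⟨main, ?_⟩
  intro x₁ h1 x₂ h2
  rw [hd1d2 x₁ h1 x₂ h2, main x₁ h1 x₂ h2]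
  have hD := hζu _ (hmem x₁ h1 x₂ h2)
  field_simp
  ring
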